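/- Nontrivial limit dynamics after rescaling time by R^α (critical slowing down compensated): let n ≥ 1, 0 < α < n, β > 0, τ ∈ ℝ, Y ∈ ℝⁿ, let j : ℝⁿ → ℂ be bounded, measurable, and continuous at 0, and let g : ℝⁿ → ℝ be a nonnegative measurable function with ∫_{ℝⁿ} (1 + |k|^{−α}) g(k) dk < ∞. Then lim_{R→∞} ∫_{ℝⁿ∖{0}} e^{i⟨k,Y⟩} · e^{i (|k|/R)^α · R^α · τ} · R^{−α} · (1 − e^{−β(|k|/R)^α})^{−1} · j(k/R) · g(k) dk = ∫_{ℝⁿ∖{0}} e^{i⟨k,Y⟩} · e^{i |k|^α τ} · (β |k|^α)^{−1} · j(0) · g(k) dk, a limit that depends nontrivially on the macroscopic time τ. -/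

import Mathlib

/-!
With `u = R^{-α}` and `c = β|k|^α` one has `β (|k|/R)^α = c u`, so the weight
`R^{-α} (1 - e^{-β (|k|/R)^α})⁻¹` equals `u (1 - e^{-c u})⁻¹`. As `R → ∞` this tends to `1/c`
(the derivative of `1 - e^{-c u}` at `0` is `c`), and `1 - e^{-x} ≥ x/(1 + x)` bounds it by
`1/c + 1` for `R ≥ 1`, which is integrable against `g` by assumption. The rescaled phase
`(|k|/R)^α R^α τ = |k|^α τ` does not depend on `R`, and `j (k/R) → j 0` by continuity, so
dominated convergence gives the limit.
-/

open MeasureTheory Complex Filter Real Topology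

lemma tendsto_mul_inv_one_sub_exp_neg_mul {c : ℝ} (hc : 0 < c) :
    Tendsto (fun u : ℝ => u * (1 - Real.exp (-(c * u)))⁻¹) (𝓝[>] 0) (𝓝 c⁻¹) := by
  have hderiv : HasDerivAt (fun u : ℝ => 1 - Real.exp (-(c * u))) c 0 := by
    simpa using (((hasDerivAt_id (0 : ℝ)).const_mul c).fun_neg.exp.const_sub 1)
  have hslope : Tendsto (fun u : ℝ => (1 - Real.exp (-(c * u))) / u) (𝓝[≠] 0) (𝓝 c) :=
    (hasDerivAt_iff_tendsto_slope.mp hderiv).congr fun u => by simp [slope_def_field]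
  refine ((hslope.inv₀ hc.ne').mono_left (nhdsWithin_mono 0 fun u hu => ne_of_gt hu)).congr
    fun u => ?_
  rw [inv_div, div_eq_mul_inv]

lemma mul_inv_one_sub_exp_neg_mul_le {c u : ℝ} (hc : 0 < c) (hu0 : 0 < u) (hu1 : u ≤ 1) :
    u * (1 - Real.exp (-(c * u)))⁻¹ ≤ c⁻¹ + 1 := by
  have hcu : 0 < c * u := mul_pos hc hu0
  have hexp : Real.exp (-(c * u)) ≤ (1 + c * u)⁻¹ := by
    rw [Real.exp_neg]
    exact inv_anti₀ (by linarith) (by linarith [Real.add_one_le_exp (c * u)])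
  have hlower : c * u / (1 + c * u) ≤ 1 - Real.exp (-(c * u)) := by
    have : c * u / (1 + c * u) = 1 - (1 + c * u)⁻¹ := by field_simp; ring
    linarith
  calc u * (1 - Real.exp (-(c * u)))⁻¹ ≤ u * ((1 + c * u) / (c * u)) := by
        rw [← inv_div]
        exact mul_le_mul_of_nonneg_left (inv_anti₀ (by positivity) hlower) hu0.le
    _ = c⁻¹ + u := by field_simp
    _ ≤ c⁻¹ + 1 := by linarith

/-- `R^{-α}` times the Bose factor `(1 - e^{-β e(x/R)})⁻¹` of the dispersion `e(x) = x^α`. -/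
noncomputable def scaledBoseWeight (α β R x : ℝ) : ℝ :=
  R ^ (-α) * (1 - Real.exp (-(β * (x / R) ^ α)))⁻¹

section scaledBoseWeight

variable {α β R x : ℝ}

lemma scaledBoseWeight_eq (hR : 0 < R) (hx : 0 ≤ x) :
    scaledBoseWeight α β R x = R ^ (-α) * (1 - Real.exp (-((β * x ^ α) * R ^ (-α))))⁻¹ := by
  rw [scaledBoseWeight, Real.div_rpow hx hR.le, Real.rpow_neg hR.le, div_eq_mul_inv, mul_assoc]

lemma scaledBoseWeight_nonneg (hβ : 0 ≤ β) (hR : 0 < R) (hx : 0 ≤ x) :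
    0 ≤ scaledBoseWeight α β R x := by
  have : Real.exp (-(β * (x / R) ^ α)) ≤ 1 :=
    Real.exp_le_one_iff.mpr (neg_nonpos.mpr (by positivity))
  exact mul_nonneg (by positivity) (inv_nonneg.mpr (by linarith))

lemma scaledBoseWeight_le (hα : 0 < α) (hβ : 0 < β) (hR : 1 ≤ R) (hx : 0 < x) :
    scaledBoseWeight α β R x ≤ β⁻¹ * x ^ (-α) + 1 := by
  have hR0 : 0 < R := one_pos.trans_le hR
  rw [scaledBoseWeight_eq hR0 hx.le, Real.rpow_neg hx.le, ← mul_inv]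
  exact mul_inv_one_sub_exp_neg_mul_le (by positivity) (by positivity)
    (Real.rpow_le_one_of_one_le_of_nonpos hR (neg_nonpos.mpr hα.le))

lemma tendsto_scaledBoseWeight (hα : 0 < α) (hβ : 0 < β) (hx : 0 < x) :
    Tendsto (fun R => scaledBoseWeight α β R x) atTop (𝓝 (β * x ^ α)⁻¹) := by
  have hu : Tendsto (fun R : ℝ => R ^ (-α)) atTop (𝓝[>] 0) :=
    tendsto_nhdsWithin_iff.mpr ⟨tendsto_rpow_neg_atTop hα,
      (eventually_gt_atTop 0).mono fun R hR => Real.rpow_pos_of_pos hR _⟩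
  refine ((tendsto_mul_inv_one_sub_exp_neg_mul (by positivity)).comp hu).congr' ?_
  filter_upwards [eventually_gt_atTop 0] with R hR
  rw [Function.comp_apply, scaledBoseWeight_eq hR hx.le]

end scaledBoseWeight

theorem tendsto_integral_scaledBoseWeight {E : Type*} [NormedAddCommGroup E] [NormedSpace ℝ E]
    [MeasurableSpace E] [BorelSpace E] {μ : Measure E} (hμ : ∀ᵐ k ∂μ, k ≠ 0)
    {p : E → ℂ} (hpmeas : Measurable p) (hp : ∀ k, ‖p k‖ ≤ 1)
    {α β : ℝ} (hα : 0 < α) (hβ : 0 < β)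
    {j : E → ℂ} (hjmeas : Measurable j) {Cj : ℝ} (hjbd : ∀ k, ‖j k‖ ≤ Cj) (hjcont : ContinuousAt j 0)
    {g : E → ℝ} (hgmeas : Measurable g) (hgnn : ∀ k, 0 ≤ g k)
    (hgint : Integrable (fun k => (1 + ‖k‖ ^ (-α)) * g k) μ) :
    Tendsto (fun R => ∫ k, p k * (scaledBoseWeight α β R ‖k‖ : ℂ) * j (R⁻¹ • k) * g k ∂μ)
      atTop (𝓝 (∫ k, p k * ((β * ‖k‖ ^ α)⁻¹ : ℝ) * j 0 * g k ∂μ)) := by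
  refine tendsto_integral_filter_of_dominated_convergence
    (fun k => (max Cj 0 * max β⁻¹ 1) * ((1 + ‖k‖ ^ (-α)) * g k)) ?_ ?_ (hgint.const_mul _) ?_
  · refine Eventually.of_forall fun R => Measurable.aestronglyMeasurable ?_
    have hw : Measurable fun k : E => scaledBoseWeight α β R ‖k‖ := by
      unfold scaledBoseWeight; fun_prop
    exact ((hpmeas.mul (measurable_ofReal.comp hw)).mul
      (hjmeas.comp (measurable_const_smul _))).mul (measurable_ofReal.comp hgmeas)
  · filter_upwards [eventually_ge_atTop 1] with R hR
    filter_upwards [hμ] with k hk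
    have hx : 0 < ‖k‖ := norm_pos_iff.mpr hk
    have hw : β⁻¹ * ‖k‖ ^ (-α) + 1 ≤ max β⁻¹ 1 * (1 + ‖k‖ ^ (-α)) := by
      have : 0 ≤ ‖k‖ ^ (-α) := by positivity
      nlinarith [le_max_left β⁻¹ 1, le_max_right β⁻¹ 1]
    have hw0 := scaledBoseWeight_nonneg (α := α) hβ.le (one_pos.trans_le hR) hx.le
    have hg0 := hgnn k
    simp only [norm_mul, Complex.norm_real, Real.norm_eq_abs, abs_of_nonneg hw0, abs_of_nonneg hg0]
    calc ‖p k‖ * scaledBoseWeight α β R ‖k‖ * ‖j (R⁻¹ • k)‖ * g k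
        ≤ 1 * (max β⁻¹ 1 * (1 + ‖k‖ ^ (-α))) * max Cj 0 * g k := by
          gcongr
          · exact hp k
          · exact (scaledBoseWeight_le hα hβ hR hx).trans hw
          · exact (hjbd _).trans (le_max_left _ _)
      _ = max Cj 0 * max β⁻¹ 1 * ((1 + ‖k‖ ^ (-α)) * g k) := by ring
  · filter_upwards [hμ] with k hk
    have hj : Tendsto (fun R : ℝ => j (R⁻¹ • k)) atTop (𝓝 (j 0)) :=
      hjcont.tendsto.comp (zero_smul ℝ k ▸ tendsto_inv_atTop_zero.smul_const k)
    have hw := (continuous_ofReal.tendsto _).comp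
      (tendsto_scaledBoseWeight hα hβ (norm_pos_iff.mpr hk))
    exact ((tendsto_const_nhds.mul hw).mul hj).mul tendsto_const_nhds

theorem rescaled_time_limit_dynamics_general {n : ℕ} (α : ℝ) (hα0 : 0 < α)
    (β : ℝ) (hβ : 0 < β) (τ : ℝ) (Y : EuclideanSpace ℝ (Fin n))
    (j : EuclideanSpace ℝ (Fin n) → ℂ) (hjmeas : Measurable j)
    (Cj : ℝ) (hjbd : ∀ k, ‖j k‖ ≤ Cj) (hjcont : ContinuousAt j 0)
    (g : EuclideanSpace ℝ (Fin n) → ℝ) (hgmeas : Measurable g) (hgnn : ∀ k, 0 ≤ g k)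
    (hgint : Integrable (fun k : EuclideanSpace ℝ (Fin n) => (1 + ‖k‖ ^ (-α)) * g k)
      (volume : Measure (EuclideanSpace ℝ (Fin n)))) :
    Tendsto (fun R : ℝ =>
        ∫ k in ({0} : Set (EuclideanSpace ℝ (Fin n)))ᶜ,
          Complex.exp (Complex.I * ((inner ℝ k Y : ℝ) : ℂ)) *
            Complex.exp (Complex.I * (((‖k‖ / R) ^ α * R ^ α * τ : ℝ) : ℂ)) *
            ((R ^ (-α) : ℝ) : ℂ) *
            (1 - ((Real.exp (-(β * (‖k‖ / R) ^ α)) : ℝ) : ℂ))⁻¹ * j (R⁻¹ • k) *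
            ((g k : ℝ) : ℂ))
      atTop
      (𝓝 (∫ k in ({0} : Set (EuclideanSpace ℝ (Fin n)))ᶜ,
        Complex.exp (Complex.I * ((inner ℝ k Y : ℝ) : ℂ)) *
          Complex.exp (Complex.I * ((‖k‖ ^ α * τ : ℝ) : ℂ)) *
          (((β * ‖k‖ ^ α)⁻¹ : ℝ) : ℂ) * j 0 * ((g k : ℝ) : ℂ))) := by
  have hphase : ∀ k : EuclideanSpace ℝ (Fin n), ‖Complex.exp (Complex.I * ((inner ℝ k Y : ℝ) : ℂ)) *
      Complex.exp (Complex.I * ((‖k‖ ^ α * τ : ℝ) : ℂ))‖ = 1 := fun k => by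
    simp only [norm_mul, mul_comm Complex.I, Complex.norm_exp_ofReal_mul_I, one_mul]
  have hlim := tendsto_integral_scaledBoseWeight (ae_restrict_mem (measurableSet_singleton 0).compl)
    (by fun_prop) (fun k => (hphase k).le) hα0 hβ hjmeas hjbd hjcont hgmeas hgnn hgint.restrict
  refine hlim.congr' ?_
  filter_upwards [eventually_gt_atTop 0] with R hR
  congr 1 with k
  rw [scaledBoseWeight, Real.div_rpow (norm_nonneg k) hR.le,
    div_mul_cancel₀ _ (Real.rpow_pos_of_pos hR α).ne']
  push_cast
  ring

/-- Nontrivial limit dynamics after rescaling the microscopic time by `R^α` (compensation of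
critical slowing down): with dispersion `e(k) = |k|^α` and macroscopic time `τ`, the scaled,
time-dependent Bose-weighted integral converges to the `1/(β|k|^α)` weighted integral with
phase `e^{i|k|^α τ}`. -/
theorem rescaled_time_limit_dynamics {n : ℕ} (hn : 1 ≤ n) (α : ℝ) (hα0 : 0 < α) (hαn : α < n)
    (β : ℝ) (hβ : 0 < β) (τ : ℝ) (Y : EuclideanSpace ℝ (Fin n))
    (j : EuclideanSpace ℝ (Fin n) → ℂ) (hjmeas : Measurable j)
    (Cj : ℝ) (hjbd : ∀ k, ‖j k‖ ≤ Cj) (hjcont : ContinuousAt j 0)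
    (g : EuclideanSpace ℝ (Fin n) → ℝ) (hgmeas : Measurable g) (hgnn : ∀ k, 0 ≤ g k)
    (hgint : Integrable (fun k : EuclideanSpace ℝ (Fin n) => (1 + ‖k‖ ^ (-α)) * g k)
      (volume : Measure (EuclideanSpace ℝ (Fin n)))) :
    Tendsto (fun R : ℝ =>
        ∫ k in ({0} : Set (EuclideanSpace ℝ (Fin n)))ᶜ,
          Complex.exp (Complex.I * ((inner ℝ k Y : ℝ) : ℂ)) *
            Complex.exp (Complex.I * (((‖k‖ / R) ^ α * R ^ α * τ : ℝ) : ℂ)) *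
            ((R ^ (-α) : ℝ) : ℂ) *
            (1 - ((Real.exp (-(β * (‖k‖ / R) ^ α)) : ℝ) : ℂ))⁻¹ * j (R⁻¹ • k) *
            ((g k : ℝ) : ℂ))
      atTop
      (𝓝 (∫ k in ({0} : Set (EuclideanSpace ℝ (Fin n)))ᶜ,
        Complex.exp (Complex.I * ((inner ℝ k Y : ℝ) : ℂ)) *
          Complex.exp (Complex.I * ((‖k‖ ^ α * τ : ℝ) : ℂ)) *
          (((β * ‖k‖ ^ α)⁻¹ : ℝ) : ℂ) * j 0 * ((g k : ℝ) : ℂ))) :=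
  rescaled_time_limit_dynamics_general α hα0 β hβ τ Y j hjmeas Cj hjbd hjcont g hgmeas hgnn hgint
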